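/- arXiv:2201.03010 — 10 statements merged into one kernel-verified Lean document; each statement's English description precedes it below -/
import Mathlib

section
/- Let Ω be a finite type, p : Ω → ℝ a probability mass function (p(l) ≥ 0 for all l and Σ_{l∈Ω} p(l) = 1) modelling the attacker's prior over event logs, H ⊆ Ω the set of logs for which the attacker's guess is correct, P = Σ_{l∈H} p(l) the prior guessing probability, and q : Ω → ℝ with q(l) > 0 for all l the likelihood of the observed output. Assume 0 < P < 1, let ε, r > 0, and suppose q(l') ≥ exp(−ε·r)·q(l) for every l' ∉ H and l ∈ H. Then the posterior guessing probability P' = (Σ_{l∈H} p(l)·q(l)) / (Σ_{l∈Ω} p(l)·q(l)) satisfies P' ≤ 1 / (1 + exp(−ε·r)·(1−P)/P). -/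
theorem posterior_guessing_probability_bound {Ω : Type*} [Fintype Ω]
    (p : Ω → ℝ) (hp : ∀ l, 0 ≤ p l) (hpsum : ∑ l, p l = 1)
    (H : Finset Ω) (P : ℝ) (hP : P = ∑ l ∈ H, p l)
    (hP0 : 0 < P) (hP1 : P < 1)
    (q : Ω → ℝ) (hq : ∀ l, 0 < q l)
    (ε r : ℝ) (hε : 0 < ε) (hr : 0 < r)
    (hlik : ∀ l' ∉ H, ∀ l ∈ H, q l' ≥ Real.exp (-(ε * r)) * q l) :
    (∑ l ∈ H, p l * q l) / (∑ l, p l * q l)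
      ≤ 1 / (1 + Real.exp (-(ε * r)) * (1 - P) / P) := by
  classical
  set c := Real.exp (-(ε * r)) with hc
  have hc0 : 0 < c := Real.exp_pos _
  set A := ∑ l ∈ H, p l * q l with hA
  set B := ∑ l ∈ Hᶜ, p l * q l with hB
  have hsplit : (∑ l, p l * q l) = A + B := (Finset.sum_add_sum_compl H _).symm
  have hpsplit : (∑ l ∈ Hᶜ, p l) = 1 - P := by
    have h1 := Finset.sum_add_sum_compl H p
    rw [hpsum, ← hP] at h1
    linarith
  have hA0 : 0 < A := by
    by_contra h
    push_neg at h
    have hpz : ∀ l ∈ H, p l = 0 := by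
      intro l hl
      have h1 : 0 ≤ p l * q l := mul_nonneg (hp l) (hq l).le
      have h2 : p l * q l ≤ A :=
        Finset.single_le_sum (fun i (_ : i ∈ H) => mul_nonneg (hp i) (hq i).le) hl
      have h3 : p l * q l = 0 := le_antisymm (le_trans h2 h) h1
      rcases mul_eq_zero.mp h3 with h' | h'
      · exact h'
      · exact absurd h' (hq l).ne'
    have : P = 0 := by rw [hP]; exact Finset.sum_eq_zero hpz
    linarith
  have hB0 : 0 ≤ B := Finset.sum_nonneg fun i _ => mul_nonneg (hp i) (hq i).le
  have key : A * (c * (1 - P)) ≤ B * P := by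
    have lhs : A * (c * (1 - P)) = ∑ l ∈ H, ∑ l' ∈ Hᶜ, (p l * q l) * (c * p l') := by
      rw [hA, ← hpsplit, Finset.mul_sum, Finset.sum_mul_sum]
    have rhs : B * P = ∑ l ∈ H, ∑ l' ∈ Hᶜ, (p l' * q l') * p l := by
      rw [hB, hP, Finset.sum_mul_sum, Finset.sum_comm]
    rw [lhs, rhs]
    apply Finset.sum_le_sum
    intro l hl
    apply Finset.sum_le_sum
    intro l' hl'
    have hql' := hlik l' (Finset.mem_compl.mp hl') l hl
    have h1 := hp l
    have h2 := hp l'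
    have h3 : p l * p l' * (c * q l) ≤ p l * p l' * (q l') :=
      mul_le_mul_of_nonneg_left hql' (mul_nonneg h1 h2)
    nlinarith [h3]
  have hD : 0 < 1 + c * (1 - P) / P := by
    have : 0 < c * (1 - P) / P := div_pos (mul_pos hc0 (by linarith)) hP0
    linarith
  rw [hsplit, div_le_div_iff₀ (by linarith) hD]
  have h4 : A * (c * (1 - P) / P) ≤ B := by
    rw [mul_div_assoc', div_le_iff₀ hP0]
    linarith [key]
  nlinarith
end

section
/- Let P, δ, r be real numbers with 0 < P, 0 < δ, P + δ < 1, and r > 0, and define ε = −ln((P/(1−P)) · (1/(δ+P) − 1)) / r. Then ε > 0 and 1 / (1 + exp(−ε·r)·(1−P)/P) = P + δ. -/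
theorem epsilon_achieves_advantage_exactly (P δ r : ℝ)
    (hP : 0 < P) (hδ : 0 < δ) (hPδ : P + δ < 1) (hr : 0 < r) :
    let ε := -Real.log ((P / (1 - P)) * (1 / (δ + P) - 1)) / r
    0 < ε ∧ 1 / (1 + Real.exp (-(ε * r)) * (1 - P) / P) = P + δ := by
  intro ε
  have h1P : 0 < 1 - P := by linarith
  have hδP : 0 < δ + P := by linarith
  have h1δP : 0 < 1 - (δ + P) := by linarith
  have hA1 : 0 < 1 / (δ + P) - 1 := by
    rw [sub_pos]
    exact one_lt_one_div hδP (by linarith)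
  have hA : 0 < (P / (1 - P)) * (1 / (δ + P) - 1) :=
    mul_pos (div_pos hP h1P) hA1
  have hlt : (P / (1 - P)) * (1 / (δ + P) - 1) < 1 := by
    rw [div_mul_eq_mul_div, div_lt_one h1P]
    have : 1 / (δ + P) - 1 = (1 - (δ + P)) / (δ + P) := by
      field_simp
    rw [this, mul_div_assoc', div_lt_iff₀ hδP]
    nlinarith [mul_pos hP hδ]
  have hεr : -(ε * r) = Real.log ((P / (1 - P)) * (1 / (δ + P) - 1)) := by
    show -(-Real.log _ / r * r) = _
    field_simp
  constructor
  · have hlog : Real.log ((P / (1 - P)) * (1 / (δ + P) - 1)) < 0 :=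
      Real.log_neg hA hlt
    exact div_pos (by linarith) hr
  · rw [hεr, Real.exp_log hA]
    have : (P / (1 - P)) * (1 / (δ + P) - 1) * (1 - P) / P = 1 / (δ + P) - 1 := by
      field_simp
    rw [this]
    field_simp
    ring
end

section
/- Let P, δ, r be real numbers with 0 < P, 0 < δ, P + δ < 1, and r > 0, and define ε = −ln((P/(1−P)) · (1/(δ+P) − 1)) / r. Then for every ε' > 0, the guessing-advantage bound 1 / (1 + exp(−ε'·r)·(1−P)/P) − P ≤ δ holds if and only if ε' ≤ ε; that is, ε is the maximum possible privacy parameter (minimum noise) that keeps the guessing advantage at most δ. -/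
theorem epsilon_is_maximum (P δ r : ℝ)
    (hP : 0 < P) (hδ : 0 < δ) (hPδ : P + δ < 1) (hr : 0 < r) :
    let ε := -Real.log ((P / (1 - P)) * (1 / (δ + P) - 1)) / r
    ∀ ε' : ℝ, 0 < ε' →
      (1 / (1 + Real.exp (-(ε' * r)) * (1 - P) / P) - P ≤ δ ↔ ε' ≤ ε) := by
  intro ε ε' hε'
  have h1P : 0 < 1 - P := by linarith
  have hδP : 0 < δ + P := by linarith
  set E := Real.exp (-(ε' * r)) with hE
  have hEpos : 0 < E := Real.exp_pos _
  have h1A : 0 < 1 + E * (1 - P) / P := by positivity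
  have hfrac : 0 < 1 / (δ + P) - 1 := by
    rw [sub_pos, lt_div_iff₀ hδP]; linarith
  have hC : 0 < (P / (1 - P)) * (1 / (δ + P) - 1) := by positivity
  have step1 : (1 / (1 + E * (1 - P) / P) - P ≤ δ) ↔
      (P / (1 - P)) * (1 / (δ + P) - 1) ≤ E := by
    constructor
    · intro h
      rw [sub_le_iff_le_add, div_le_iff₀ h1A] at h
      rw [div_mul_eq_mul_div, div_le_iff₀ h1P]
      have h2 : P ≤ (δ + P) * (P + E * (1 - P)) := by
        have := mul_le_mul_of_nonneg_right h hP.le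
        calc P = 1 * P := (one_mul P).symm
          _ ≤ (δ + P) * (1 + E * (1 - P) / P) * P := this
          _ = (δ + P) * (P + E * (1 - P)) := by field_simp
      have h3 : P * (1 / (δ + P) - 1) = P / (δ + P) - P := by ring
      rw [h3, sub_le_iff_le_add, div_le_iff₀ hδP]
      nlinarith
    · intro h
      rw [sub_le_iff_le_add, div_le_iff₀ h1A]
      rw [div_mul_eq_mul_div, div_le_iff₀ h1P] at h
      have h3 : P * (1 / (δ + P) - 1) = P / (δ + P) - P := by ring
      rw [h3, sub_le_iff_le_add, div_le_iff₀ hδP] at h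
      have h4 : (δ + P) * (1 + E * (1 - P) / P) * P = (δ + P) * (P + E * (1 - P)) := by
        field_simp
      rw [← mul_le_mul_iff_of_pos_right hP, one_mul, h4]
      nlinarith
  rw [step1]
  rw [show ε = -Real.log ((P / (1 - P)) * (1 / (δ + P) - 1)) / r from rfl]
  rw [← Real.log_le_iff_le_exp hC]
  rw [le_div_iff₀ hr]
  constructor <;> intro h <;> linarith
end

section
/- Let Ω be a finite type, p : Ω → ℝ a probability mass function (p(l) ≥ 0 for all l and Σ_{l∈Ω} p(l) = 1) modelling the attacker's prior over event logs, H ⊆ Ω the set of logs for which the attacker's guess is correct, P = Σ_{l∈H} p(l) the prior guessing probability, and q : Ω → ℝ with q(l) > 0 for all l the likelihood of the observed output. Let δ, r > 0 with P > 0 and P + δ < 1, set ε = −ln((P/(1−P)) · (1/(δ+P) − 1)) / r, and suppose q(l') ≥ exp(−ε·r)·q(l) for every l' ∉ H and l ∈ H. Then the posterior guessing probability P' = (Σ_{l∈H} p(l)·q(l)) / (Σ_{l∈Ω} p(l)·q(l)) satisfies P' − P ≤ δ. -/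
theorem guessing_advantage_guarantee {Ω : Type*} [Fintype Ω]
    (p : Ω → ℝ) (hp : ∀ l, 0 ≤ p l) (hpsum : ∑ l, p l = 1)
    (H : Finset Ω) (P : ℝ) (hP : P = ∑ l ∈ H, p l) (hP0 : 0 < P)
    (q : Ω → ℝ) (hq : ∀ l, 0 < q l)
    (δ r : ℝ) (hδ : 0 < δ) (hr : 0 < r) (hPδ : P + δ < 1)
    (ε : ℝ) (hε : ε = -Real.log ((P / (1 - P)) * (1 / (δ + P) - 1)) / r)
    (hlik : ∀ l' ∉ H, ∀ l ∈ H, q l' ≥ Real.exp (-(ε * r)) * q l) :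
    (∑ l ∈ H, p l * q l) / (∑ l, p l * q l) - P ≤ δ := by
  classical
  have h1P : 0 < 1 - P := by linarith
  have hδP : 0 < δ + P := by linarith
  have hδP1 : δ + P < 1 := by linarith
  set c := Real.exp (-(ε * r)) with hcdef
  have hcpos : 0 < c := Real.exp_pos _
  have hX : 0 < (P / (1 - P)) * (1 / (δ + P) - 1) := by
    apply mul_pos (div_pos hP0 h1P)
    have : 1 < 1 / (δ + P) := one_lt_one_div hδP hδP1
    linarith
  have hc : c = (P / (1 - P)) * (1 / (δ + P) - 1) := by
    rw [hcdef, hε, neg_div, neg_mul, neg_neg, div_mul_cancel₀ _ (ne_of_gt hr),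
      Real.exp_log hX]
  have hHne : H.Nonempty := by
    rcases H.eq_empty_or_nonempty with h | h
    · exfalso; rw [h] at hP; simp at hP; linarith
    · exact h
  obtain ⟨l₀, hl₀, hmax⟩ := H.exists_max_image q hHne
  have hQpos : 0 < q l₀ := hq l₀
  set A := ∑ l ∈ H, p l * q l with hA
  set B := ∑ l ∈ Hᶜ, p l * q l with hB
  have hAle : A ≤ P * q l₀ := by
    rw [hP, Finset.sum_mul]
    apply Finset.sum_le_sum
    intro i hi
    exact mul_le_mul_of_nonneg_left (hmax i hi) (hp i)
  have hSP : ∑ l ∈ Hᶜ, p l = 1 - P := by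
    have h := Finset.sum_add_sum_compl H p
    rw [hpsum, ← hP] at h
    linarith
  have hBge : (1 - P) * (c * q l₀) ≤ B := by
    rw [← hSP, Finset.sum_mul]
    apply Finset.sum_le_sum
    intro i hi
    exact mul_le_mul_of_nonneg_left (hlik i (Finset.mem_compl.mp hi) l₀ hl₀) (hp i)
  have hA0 : 0 ≤ A := Finset.sum_nonneg fun i _ => mul_nonneg (hp i) (hq i).le
  have hBpos : 0 < B := lt_of_lt_of_le (by positivity) hBge
  have hT : ∑ l, p l * q l = A + B := (Finset.sum_add_sum_compl H _).symm
  rw [hT, sub_le_iff_le_add, div_le_iff₀ (by linarith : (0:ℝ) < A + B)]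
  have key : (δ + P) * c * (1 - P) = P * (1 - δ - P) := by
    rw [hc]; field_simp; ring
  nlinarith [mul_le_mul_of_nonneg_left hAle (by linarith : (0:ℝ) ≤ 1 - δ - P),
    mul_le_mul_of_nonneg_left hBge (le_of_lt hδP), key, hQpos, hcpos]
end

section
/- Let δ ∈ (0,1) and define g : (0, 1−δ) → ℝ by g(P) = −ln((P/(1−P)) · (1/(δ+P) − 1)). Then for every P ∈ (0, 1−δ): g(P) ≥ g((1−δ)/2); that is, the worst-case prior P = (1−δ)/2 minimizes ε (maximizes the required noise) over all admissible priors. -/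
theorem worst_case_prior_minimizes_epsilon (δ : ℝ) (h0 : 0 < δ) (h1 : δ < 1)
    (P : ℝ) (hP0 : 0 < P) (hP1 : P < 1 - δ) :
    -Real.log ((P / (1 - P)) * (1 / (δ + P) - 1))
      ≥ -Real.log ((((1 - δ) / 2) / (1 - (1 - δ) / 2)) *
          (1 / (δ + (1 - δ) / 2) - 1)) := by
  have hdP : 0 < δ + P := by linarith
  have hdP1 : δ + P < 1 := by linarith
  have h1P : 0 < 1 - P := by linarith
  have h2 : (0:ℝ) < 1 - (1 - δ) / 2 := by linarith
  have h3 : (0:ℝ) < δ + (1 - δ) / 2 := by linarith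
  have h4 : (1:ℝ) + δ ≠ 0 := by linarith
  have hfpos : 0 < (P / (1 - P)) * (1 / (δ + P) - 1) := by
    apply mul_pos (div_pos hP0 h1P)
    have : 1 < 1 / (δ + P) := (one_lt_div hdP).mpr hdP1
    linarith
  have key : (P / (1 - P)) * (1 / (δ + P) - 1)
      ≤ (((1 - δ) / 2) / (1 - (1 - δ) / 2)) * (1 / (δ + (1 - δ) / 2) - 1) := by
    have lhs : (P / (1 - P)) * (1 / (δ + P) - 1)
        = (P * (1 - δ - P)) / ((1 - P) * (δ + P)) := by
      rw [eq_div_iff (by positivity)]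
      field_simp
      ring
    have rhs : (((1 - δ) / 2) / (1 - (1 - δ) / 2)) * (1 / (δ + (1 - δ) / 2) - 1)
        = ((1 - δ) * (1 - δ)) / ((1 + δ) * (1 + δ)) := by
      have e1 : 1 - (1 - δ) / 2 = (1 + δ) / 2 := by ring
      have e2 : δ + (1 - δ) / 2 = (1 + δ) / 2 := by ring
      rw [e1, e2, eq_div_iff (by positivity)]
      field_simp
      ring
    rw [lhs, rhs, div_le_div_iff₀ (mul_pos h1P hdP) (by nlinarith)]
    nlinarith [sq_nonneg (P - (1 - δ) / 2), sq_nonneg ((1 + δ) * P - (1 - δ) * (δ + P)), mul_pos hP0 h1P]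
  have := Real.log_le_log hfpos key
  linarith
end

section
/- Let δ ∈ (0,1) and set ε = 2·ln((1+δ)/(1−δ)). Then for every P ∈ (0, 1−δ): 1 / (1 + exp(−ε)·(1−P)/P) − P ≤ δ. -/
theorem worst_case_epsilon_bounds_advantage (δ : ℝ) (h0 : 0 < δ) (h1 : δ < 1) :
    let ε := 2 * Real.log ((1 + δ) / (1 - δ))
    ∀ P : ℝ, 0 < P → P < 1 - δ →
      1 / (1 + Real.exp (-ε) * (1 - P) / P) - P ≤ δ := by
  intro ε P hP0 hP1
  have h1d : (0:ℝ) < 1 - δ := by linarith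
  have h1d' : (0:ℝ) < 1 + δ := by linarith
  have ht : Real.exp (-ε) = ((1 - δ) / (1 + δ))^2 := by
    have hlog : -ε = 2 * Real.log ((1 - δ) / (1 + δ)) := by
      have : ((1 + δ) / (1 - δ))⁻¹ = (1 - δ) / (1 + δ) := by field_simp
      show -(2 * Real.log ((1 + δ) / (1 - δ))) = _
      rw [← this, Real.log_inv]
      ring
    rw [hlog, two_mul, Real.exp_add, sq,
      Real.exp_log (by positivity : (0:ℝ) < (1 - δ) / (1 + δ))]
  rw [ht]
  have hden : 0 < 1 + ((1 - δ) / (1 + δ))^2 * (1 - P) / P := by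
    have : 0 < ((1 - δ) / (1 + δ))^2 * (1 - P) / P :=
      div_pos (mul_pos (by positivity) (by linarith)) hP0
    linarith
  rw [sub_le_iff_le_add, div_le_iff₀ hden]
  have h2 : (0:ℝ) < (1 + δ)^2 := by positivity
  have key : P * (1 + δ)^2 ≤ (δ + P) * (P * (1 + δ)^2 + (1 - δ)^2 * (1 - P)) := by
    nlinarith [sq_nonneg (2 * P - (1 - δ)), mul_pos hP0 h0,
      mul_nonneg (sq_nonneg (2 * P - (1 - δ))) h0.le]
  rw [← sub_nonneg] at key ⊢
  have expand : (δ + P) * (1 + ((1 - δ) / (1 + δ)) ^ 2 * (1 - P) / P) - 1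
      = ((δ + P) * (P * (1 + δ)^2 + (1 - δ)^2 * (1 - P)) - P * (1 + δ)^2)
        / (P * (1 + δ)^2) := by
    field_simp
  rw [expand]
  positivity
end

section
/- Let δ ∈ (0,1), let c = 6^(1/3) and b = (√3·√(2δ³ + 21δ² − 48δ + 25) − 9δ + 9)^(1/3), and set x = b/c² − (δ−1)/(c·b). Then b > 0, 0 < x < 1, and 2·x³ + (δ−1)·x + (δ−1) = 0. -/
theorem cubic_root_formula (δ : ℝ) (h0 : 0 < δ) (h1 : δ < 1) :
    let c : ℝ := (6 : ℝ) ^ ((1 : ℝ) / 3)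
    let b : ℝ := (Real.sqrt 3 * Real.sqrt (2 * δ ^ 3 + 21 * δ ^ 2 - 48 * δ + 25)
        - 9 * δ + 9) ^ ((1 : ℝ) / 3)
    let x : ℝ := b / c ^ 2 - (δ - 1) / (c * b)
    0 < b ∧ 0 < x ∧ x < 1 ∧ 2 * x ^ 3 + (δ - 1) * x + (δ - 1) = 0 := by
  intro c b x
  set s : ℝ := Real.sqrt (6 * δ + 75) with hs
  have hs0 : 0 ≤ s := Real.sqrt_nonneg _
  have hs2 : s ^ 2 = 6 * δ + 75 := Real.sq_sqrt (by nlinarith)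
  have hsqrtD : Real.sqrt 3 * Real.sqrt (2 * δ ^ 3 + 21 * δ ^ 2 - 48 * δ + 25)
      = (1 - δ) * s := by
    rw [show (2 * δ ^ 3 + 21 * δ ^ 2 - 48 * δ + 25 : ℝ)
        = (1 - δ) ^ 2 * (2 * δ + 25) by ring,
      ← Real.sqrt_mul (by norm_num : (0:ℝ) ≤ 3),
      show (3 : ℝ) * ((1 - δ) ^ 2 * (2 * δ + 25)) = (1 - δ) ^ 2 * (6 * δ + 75) by ring,
      Real.sqrt_mul (sq_nonneg _), Real.sqrt_sq (by linarith)]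
  have hApos : (0:ℝ) < (1 - δ) * (s + 9) :=
    mul_pos (by linarith) (by linarith)
  have hbdef : b = ((1 - δ) * (s + 9)) ^ ((1:ℝ)/3) := by
    show (Real.sqrt 3 * Real.sqrt (2 * δ ^ 3 + 21 * δ ^ 2 - 48 * δ + 25)
        - 9 * δ + 9) ^ ((1 : ℝ) / 3) = _
    rw [hsqrtD]; ring_nf
  have hbpos : 0 < b := by
    rw [hbdef]; exact Real.rpow_pos_of_pos hApos _
  have hb3 : b ^ 3 = (1 - δ) * (s + 9) := by
    rw [hbdef, ← Real.rpow_natCast (((1 - δ) * (s + 9)) ^ ((1:ℝ)/3)) 3,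
      ← Real.rpow_mul hApos.le]
    norm_num
  have hcpos : 0 < c := Real.rpow_pos_of_pos (by norm_num) _
  have hc3 : c ^ 3 = 6 := by
    rw [show c = (6:ℝ) ^ ((1:ℝ)/3) from rfl,
      ← Real.rpow_natCast ((6:ℝ) ^ ((1:ℝ)/3)) 3,
      ← Real.rpow_mul (by norm_num : (0:ℝ) ≤ 6)]
    norm_num
  have hbne : b ≠ 0 := ne_of_gt hbpos
  have hcne : c ≠ 0 := ne_of_gt hcpos
  have hx : x = b / c ^ 2 + (1 - δ) / (c * b) := by
    show b / c ^ 2 - (δ - 1) / (c * b) = _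
    ring
  have huv : (b / c ^ 2) * ((1 - δ) / (c * b)) = (1 - δ) / 6 := by
    field_simp
    linear_combination (δ - 1) * hc3
  have hcube : 2 * (b / c ^ 2) ^ 3 + 2 * ((1 - δ) / (c * b)) ^ 3 = 1 - δ := by
    have e1 : (b / c ^ 2) ^ 3 = b ^ 3 / (c ^ 3) ^ 2 := by ring
    have e2 : ((1 - δ) / (c * b)) ^ 3 = (1 - δ) ^ 3 / (c ^ 3 * b ^ 3) := by ring
    rw [e1, e2, hc3, hb3]
    have hAne : (1 - δ) * (s + 9) ≠ 0 := ne_of_gt hApos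
    field_simp
    linear_combination (12 * (1 - δ) ^ 2 + 22 * δ - 12 * δ ^ 2 - 10) * hs2
  have heq : 2 * x ^ 3 + (δ - 1) * x + (δ - 1) = 0 := by
    rw [hx]
    linear_combination hcube + 6 * (b / c ^ 2 + (1 - δ) / (c * b)) * huv
  have hxpos : 0 < x := by
    rw [hx]
    have h1' : 0 < b / c ^ 2 := by positivity
    have h2' : 0 < (1 - δ) / (c * b) := by
      apply div_pos (by linarith) (by positivity)
    linarith
  have hxlt : x < 1 := by
    by_contra h
    push_neg at h
    nlinarith [mul_nonneg (sub_nonneg.2 h) (sq_nonneg x),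
      mul_nonneg (sub_nonneg.2 h) (le_of_lt hxpos)]
  exact ⟨hbpos, hxpos, hxlt, heq⟩
end

section
/- Let δ ∈ (0,1), let c = 6^(1/3) and b = (√3·√(2δ³ + 21δ² − 48δ + 25) − 9δ + 9)^(1/3), and set ε = −2·ln(b/c² − (δ−1)/(c·b)). Then ε > 0 and, with δ' = (exp(ε/2) − 1)/(exp(ε/2) + 1), we have exp(−ε)·δ' + (1 − exp(−ε)) = δ. -/
theorem oversampling_epsilon_formula (δ : ℝ) (h0 : 0 < δ) (h1 : δ < 1) :
    let c : ℝ := (6 : ℝ) ^ ((1 : ℝ) / 3)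
    let b : ℝ := (Real.sqrt 3 * Real.sqrt (2 * δ ^ 3 + 21 * δ ^ 2 - 48 * δ + 25)
        - 9 * δ + 9) ^ ((1 : ℝ) / 3)
    let ε : ℝ := -2 * Real.log (b / c ^ 2 - (δ - 1) / (c * b))
    let δ' : ℝ := (Real.exp (ε / 2) - 1) / (Real.exp (ε / 2) + 1)
    0 < ε ∧ Real.exp (-ε) * δ' + (1 - Real.exp (-ε)) = δ := by
  intro c b ε δ'
  have hDpos : (0:ℝ) < 2 * δ ^ 3 + 21 * δ ^ 2 - 48 * δ + 25 := by
    have h := mul_pos (pow_pos (by linarith : (0:ℝ) < 1 - δ) 2)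
      (by linarith : (0:ℝ) < 2 * δ + 25)
    nlinarith [h]
  set s : ℝ := 1 - δ with hs
  have hs0 : 0 < s := by rw [hs]; linarith
  have hs1 : s < 1 := by rw [hs]; linarith
  set w : ℝ := Real.sqrt 3 * Real.sqrt (2 * δ ^ 3 + 21 * δ ^ 2 - 48 * δ + 25) with hw
  have hwpos : 0 < w :=
    mul_pos (Real.sqrt_pos.mpr (by norm_num)) (Real.sqrt_pos.mpr hDpos)
  have hw2 : w ^ 2 = 81 * s ^ 2 - 6 * s ^ 3 := by
    have h3 : (Real.sqrt 3) ^ 2 = 3 := Real.sq_sqrt (by norm_num)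
    have hD : (Real.sqrt (2 * δ ^ 3 + 21 * δ ^ 2 - 48 * δ + 25)) ^ 2
        = 2 * δ ^ 3 + 21 * δ ^ 2 - 48 * δ + 25 := Real.sq_sqrt hDpos.le
    have hh : w ^ 2 = 3 * (2 * δ ^ 3 + 21 * δ ^ 2 - 48 * δ + 25) := by
      rw [hw, mul_pow, h3, hD]
    rw [hh, hs]; ring
  have hBpos : 0 < w + 9 * s := by positivity
  have hbdef : b = (w - 9 * δ + 9) ^ ((1:ℝ)/3) := rfl
  have hB' : w - 9 * δ + 9 = w + 9 * s := by rw [hs]; ring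
  have hbpos : 0 < b := by rw [hbdef, hB']; exact Real.rpow_pos_of_pos hBpos _
  have hb3 : b ^ 3 = w + 9 * s := by
    rw [hbdef, hB', ← Real.rpow_natCast ((w + 9*s) ^ ((1:ℝ)/3)) 3, ← Real.rpow_mul hBpos.le]
    norm_num
  have hcpos : (0:ℝ) < c := Real.rpow_pos_of_pos (by norm_num) _
  have hc3 : c ^ 3 = 6 := by
    show ((6:ℝ) ^ ((1:ℝ)/3)) ^ 3 = 6
    rw [← Real.rpow_natCast ((6:ℝ) ^ ((1:ℝ)/3)) 3, ← Real.rpow_mul (by norm_num)]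
    norm_num
  set t : ℝ := b / c ^ 2 - (δ - 1) / (c * b) with htdef
  have hε : ε = -2 * Real.log t := rfl
  have hδ' : δ' = (Real.exp (ε / 2) - 1) / (Real.exp (ε / 2) + 1) := rfl
  clear_value δ' ε t b c w s
  have hbne : b ≠ 0 := ne_of_gt hbpos
  have hcne : c ≠ 0 := ne_of_gt hcpos
  have hBne : w + 9 * s ≠ 0 := ne_of_gt hBpos
  have ht' : t = b / c ^ 2 + s / (c * b) := by rw [htdef, hs]; ring
  have ht0 : 0 < t := by rw [ht']; positivity
  -- Cardano verification
  have hc6 : (c ^ 2) ^ 3 = 36 := by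
    have : (c ^ 2) ^ 3 = (c ^ 3) ^ 2 := by ring
    rw [this, hc3]; norm_num
  have hu3 : (b / c ^ 2) ^ 3 = (w + 9 * s) / 36 := by
    rw [div_pow, hb3, hc6]
  have hv3 : (s / (c * b)) ^ 3 = s ^ 3 / (6 * (w + 9 * s)) := by
    rw [div_pow, mul_pow, hc3, hb3]
  have huv : (b / c ^ 2) * (s / (c * b)) = s / 6 := by
    field_simp
    linear_combination (-1 : ℝ) * hc3
  have hsum : (b / c ^ 2) ^ 3 + (s / (c * b)) ^ 3 = s / 2 := by
    rw [hu3, hv3]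
    field_simp
    linear_combination 12 * hw2
  have hcube : t ^ 3 = (b / c ^ 2) ^ 3 + (s / (c * b)) ^ 3
      + 3 * ((b / c ^ 2) * (s / (c * b))) * t := by
    rw [ht']; ring
  have key : 2 * t ^ 3 = s * (1 + t) := by
    rw [hsum, huv] at hcube; linear_combination 2 * hcube
  have ht1 : t < 1 := by
    by_contra hcon
    push_neg at hcon
    have h2 : (0:ℝ) ≤ (t - 1) * (2 * t ^ 2 + 2 * t + 1) := by
      apply mul_nonneg (by linarith)
      nlinarith [sq_nonneg t]
    have h3 : s * (1 + t) < 1 * (1 + t) := by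
      apply mul_lt_mul_of_pos_right hs1 (by linarith)
    nlinarith [key, h2, h3]
  have hlog : Real.log t < 0 := Real.log_neg ht0 ht1
  have hεpos : 0 < ε := by rw [hε]; linarith
  refine ⟨hεpos, ?_⟩
  have hexp2 : Real.exp (ε / 2) = 1 / t := by
    rw [hε]
    have h2 : -2 * Real.log t / 2 = -Real.log t := by ring
    rw [h2, Real.exp_neg, Real.exp_log ht0, one_div]
  have hexpneg : Real.exp (-ε) = t ^ 2 := by
    rw [hε]
    have h2 : -(-2 * Real.log t) = Real.log t + Real.log t := by ring
    rw [h2, Real.exp_add, Real.exp_log ht0]; ring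
  rw [hδ', hexp2, hexpneg]
  have hfrac : (1 / t - 1) / (1 / t + 1) = (1 - t) / (1 + t) := by
    rw [div_eq_div_iff (by positivity) (by positivity)]
    field_simp
  rw [hfrac]
  have hδs : δ = 1 - s := by rw [hs]; ring
  rw [hδs]
  have h1t : (1:ℝ) + t ≠ 0 := by positivity
  field_simp
  linear_combination (-1 : ℝ) * key
end

section
/- For ε > 0, the Laplace density with rate ε is f_ε : ℝ → ℝ, f_ε(x) = (ε/2)·exp(−ε·|x|). Let ε, r > 0, let m be a positive natural number, set λ = ε/(m·r), and let y, a, b : Fin m → ℝ with |a(i) − b(i)| ≤ r for every i. Then Π_{i} f_λ(y(i) − a(i)) ≤ exp(ε) · Π_{i} f_λ(y(i) − b(i)). -/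
theorem scaled_laplace_trace_composition (ε r : ℝ) (hε : 0 < ε) (hr : 0 < r)
    (m : ℕ) (hm : 0 < m) (y a b : Fin m → ℝ) (hab : ∀ i, |a i - b i| ≤ r) :
    let lam := ε / (m * r)
    (∏ i, (lam / 2) * Real.exp (-(lam * |y i - a i|)))
      ≤ Real.exp ε * ∏ i, (lam / 2) * Real.exp (-(lam * |y i - b i|)) := by
  intro lam
  have hm' : (0:ℝ) < m := by exact_mod_cast hm
  have hmr : (0:ℝ) < m * r := by positivity
  have hlam : 0 < lam := div_pos hε hmr
  have key : ∀ i : Fin m,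
      (lam / 2) * Real.exp (-(lam * |y i - a i|))
        ≤ Real.exp (lam * r) * ((lam / 2) * Real.exp (-(lam * |y i - b i|))) := by
    intro i
    have habs : |y i - b i| - |y i - a i| ≤ r := by
      have h := abs_sub_abs_le_abs_sub (y i - b i) (y i - a i)
      have h2 : (y i - b i) - (y i - a i) = a i - b i := by ring
      rw [h2] at h
      exact h.trans (hab i)
    have hexp : Real.exp (-(lam * |y i - a i|))
        ≤ Real.exp (lam * r) * Real.exp (-(lam * |y i - b i|)) := by
      rw [← Real.exp_add]
      apply Real.exp_le_exp.mpr
      nlinarith [hlam.le]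
    calc (lam / 2) * Real.exp (-(lam * |y i - a i|))
        ≤ (lam / 2) * (Real.exp (lam * r) * Real.exp (-(lam * |y i - b i|))) := by
          apply mul_le_mul_of_nonneg_left hexp (by positivity)
      _ = Real.exp (lam * r) * ((lam / 2) * Real.exp (-(lam * |y i - b i|))) := by ring
  calc (∏ i, (lam / 2) * Real.exp (-(lam * |y i - a i|)))
      ≤ ∏ i, Real.exp (lam * r) * ((lam / 2) * Real.exp (-(lam * |y i - b i|))) := by
        apply Finset.prod_le_prod (fun i _ => by positivity) (fun i _ => key i)
    _ = Real.exp (lam * r) ^ m * ∏ i, (lam / 2) * Real.exp (-(lam * |y i - b i|)) := by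
        rw [Finset.prod_mul_distrib, Finset.prod_const, Finset.card_univ, Fintype.card_fin]
    _ = Real.exp ε * ∏ i, (lam / 2) * Real.exp (-(lam * |y i - b i|)) := by
        rw [← Real.exp_nat_mul]
        congr 2
        simp only [lam]
        field_simp
end

section
/- Let Ω be a finite type, p : Ω → ℝ a probability mass function (p(l) ≥ 0 for all l and Σ_{l∈Ω} p(l) = 1) modelling the attacker's prior over event logs, H ⊆ Ω the set of logs for which the attacker's guess is correct, and P = Σ_{l∈H} p(l) the prior guessing probability with 0 < P. Let δ > 0 with P + δ < 1, let r > 0, let m be a positive natural number, and let t : Ω → (Fin m → ℝ) assign to each log its vector of time differences, with |t(l)(i) − t(l')(i)| ≤ r for all l, l' ∈ Ω and all i. Set ε = −ln((P/(1−P)) · (1/(δ+P) − 1)) / (m·r), fix an observed output y : Fin m → ℝ, and define the likelihood q(l) = Π_{i} (ε/2)·exp(−ε·|y(i) − t(l)(i)|). Then the posterior guessing probability P' = (Σ_{l∈H} p(l)·q(l)) / (Σ_{l∈Ω} p(l)·q(l)) satisfies P' − P ≤ δ. -/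
theorem timestamp_anonymization_advantage {Ω : Type*} [Fintype Ω]
    (p : Ω → ℝ) (hp : ∀ l, 0 ≤ p l) (hpsum : ∑ l, p l = 1)
    (H : Finset Ω) (P : ℝ) (hP : P = ∑ l ∈ H, p l) (hP0 : 0 < P)
    (δ : ℝ) (hδ : 0 < δ) (hPδ : P + δ < 1)
    (r : ℝ) (hr : 0 < r) (m : ℕ) (hm : 0 < m)
    (t : Ω → Fin m → ℝ) (ht : ∀ l l' : Ω, ∀ i, |t l i - t l' i| ≤ r)
    (y : Fin m → ℝ) :
    let ε := -Real.log ((P / (1 - P)) * (1 / (δ + P) - 1)) / (m * r)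
    let q : Ω → ℝ := fun l => ∏ i, (ε / 2) * Real.exp (-(ε * |y i - t l i|))
    (∑ l ∈ H, p l * q l) / (∑ l, p l * q l) - P ≤ δ := by
  intro ε q
  classical
  set c := (P / (1 - P)) * (1 / (δ + P) - 1) with hc
  have hεdef : ε = -Real.log c / (m * r) := rfl
  have hP1 : P < 1 := by linarith
  have hPd0 : 0 < δ + P := by linarith
  have h1P : 0 < 1 - P := by linarith
  have h1Pd : 0 < 1 - δ - P := by linarith
  have hceq : c * ((1 - P) * (δ + P)) = P * (1 - δ - P) := by
    have e1 : 1 / (δ + P) - 1 = (1 - δ - P) / (δ + P) := by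
      rw [div_sub' hPd0.ne']; ring_nf
    rw [hc, e1, div_mul_div_comm, div_mul_eq_mul_div,
      div_eq_iff (by positivity : (1 - P) * (δ + P) ≠ 0)]
  have hc0 : 0 < c := by
    have h : 0 < P * (1 - δ - P) := mul_pos hP0 h1Pd
    nlinarith [mul_pos h1P hPd0]
  have hc1 : c < 1 := by
    nlinarith [mul_pos h1P hPd0]
  have hmr : (0:ℝ) < m * r := mul_pos (by exact_mod_cast hm) hr
  have hε : 0 < ε := by
    rw [hεdef]
    apply div_pos _ hmr
    have := Real.log_neg hc0 hc1
    linarith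
  have hq0 : ∀ l, 0 < q l := fun l =>
    Finset.prod_pos fun i _ => mul_pos (by positivity) (Real.exp_pos _)
  -- key ratio bound
  have hq : ∀ l l', q l ≤ (1 / c) * q l' := by
    intro l l'
    have h1 : q l ≤ ∏ i, (Real.exp (ε * r) * ((ε / 2) * Real.exp (-(ε * |y i - t l' i|)))) := by
      apply Finset.prod_le_prod
      · intro i _; positivity
      · intro i _
        rw [show Real.exp (ε * r) * ((ε / 2) * Real.exp (-(ε * |y i - t l' i|)))
            = (ε / 2) * Real.exp (ε * r + -(ε * |y i - t l' i|)) by rw [Real.exp_add]; ring]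
        apply mul_le_mul_of_nonneg_left _ (by positivity)
        apply Real.exp_le_exp.mpr
        have habs : |y i - t l' i| - r ≤ |y i - t l i| := by
          have h := abs_sub_abs_le_abs_sub (y i - t l' i) (y i - t l i)
          have h2 : (y i - t l' i) - (y i - t l i) = t l i - t l' i := by ring
          rw [h2] at h
          have := ht l l' i
          linarith
        nlinarith [mul_nonneg hε.le (by linarith : (0:ℝ) ≤ r + |y i - t l i| - |y i - t l' i|)]
    calc q l ≤ _ := h1
      _ = Real.exp (ε * r) ^ m * q l' := by
          rw [Finset.prod_mul_distrib, Finset.prod_const, Finset.card_univ, Fintype.card_fin]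
      _ = (1 / c) * q l' := by
          congr 1
          rw [← Real.exp_nat_mul]
          have hexp : (m:ℝ) * (ε * r) = -Real.log c := by
            rw [hεdef]; field_simp
          rw [hexp, Real.exp_neg, Real.exp_log hc0, one_div]
  -- witness with positive prior in H
  obtain ⟨lw, hlwH, hlw⟩ : ∃ l ∈ H, 0 < p l := by
    by_contra h
    push_neg at h
    have : ∑ l ∈ H, p l ≤ 0 := Finset.sum_nonpos fun l hl => h l hl
    rw [← hP] at this; linarith
  obtain ⟨l0, -, hl0⟩ := Finset.exists_min_image Finset.univ q ⟨lw, Finset.mem_univ lw⟩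
  set A := ∑ l ∈ H, p l * q l with hA
  set B := ∑ l ∈ Finset.univ \ H, p l * q l with hB
  have hsplit : (∑ l, p l * q l) = A + B := by
    rw [hA, hB, add_comm, Finset.sum_sdiff (Finset.subset_univ H)]
  have hq' : ∀ l l', c * q l ≤ q l' := by
    intro l l'
    have h := mul_le_mul_of_nonneg_left (hq l l') hc0.le
    rwa [one_div, ← mul_assoc, mul_inv_cancel₀ hc0.ne', one_mul] at h
  have hAle : c * A ≤ P * q l0 := by
    rw [hA, Finset.mul_sum, hP, Finset.sum_mul]
    apply Finset.sum_le_sum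
    intro l _
    calc c * (p l * q l) = p l * (c * q l) := by ring
      _ ≤ p l * q l0 := mul_le_mul_of_nonneg_left (hq' l l0) (hp l)
  have hsumc : ∑ l ∈ Finset.univ \ H, p l = 1 - P := by
    have h := Finset.sum_sdiff (Finset.subset_univ H) (f := p)
    rw [hpsum, ← hP] at h
    linarith
  have hBge : (1 - P) * q l0 ≤ B := by
    calc (1 - P) * q l0 = ∑ l ∈ Finset.univ \ H, p l * q l0 := by
            rw [← Finset.sum_mul, hsumc]
      _ ≤ B := by
            apply Finset.sum_le_sum
            intro l _
            exact mul_le_mul_of_nonneg_left (hl0 l (Finset.mem_univ l)) (hp l)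
  have hS : 0 < ∑ l, p l * q l := by
    have h1 : p lw * q lw ≤ ∑ l, p l * q l :=
      Finset.single_le_sum (fun i _ => mul_nonneg (hp i) (hq0 i).le) (Finset.mem_univ lw)
    have := mul_pos hlw (hq0 lw)
    linarith
  rw [sub_le_iff_le_add, div_le_iff₀ hS, hsplit]
  have main : (1 - δ - P) * A ≤ (δ + P) * B := by
    rw [← mul_le_mul_iff_right₀ hc0]
    nlinarith [mul_le_mul_of_nonneg_left hAle h1Pd.le,
      mul_le_mul_of_nonneg_left hBge (mul_pos hc0 hPd0).le, hceq, hq0 l0]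
  nlinarith [main]
end
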